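/- arXiv:2105.13538 — 4 statements merged into one kernel-verified Lean document; each statement's English description precedes it below -/
import Mathlib

section
/- Let V be a complex vector space, a a Hermitian positive definite sesquilinear form on V, N ≥ 1, and u_0, u_1, …, u_N ∈ V. Let M ≥ 1 be a natural number and, for each i ∈ {1, …, N}, let S(i) ⊆ {1, …, N} be a set with i ∈ S(i), with symmetric membership (j ∈ S(i) if and only if i ∈ S(j)), and with |S(i)| ≤ M. Assume a(u_i, u_j) = 0 whenever i, j ∈ {1, …, N} and j ∉ S(i). Then a(Σ_{i=0}^{N} u_i, Σ_{i=0}^{N} u_i) ≤ 2M · (Σ_{i=1}^{N} a(u_i, u_i) + a(u_0, u_0)). -/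
/-! Expanding `|Σ v_i|²` leaves only the pairs `j ∈ S i`; each cross term is bounded by
`2 Re a(v_i, v_j) ≤ |v_i|² + |v_j|²`, and by the symmetry of `S` every `|v_j|²` is then counted
`|S j| ≤ M` times. The coarse piece `u_0` is split off with `|x + y|² ≤ 2|x|² + 2|y|²`. -/

open scoped ComplexConjugate

/-- A Hermitian positive definite sesquilinear form on a complex vector space:
linear in the first argument, Hermitian symmetric (hence conjugate-linear in the
second argument), and with `(a v v)` real and strictly positive for `v ≠ 0`. -/
def IsHermitianPD {V : Type*} [AddCommGroup V] [Module ℂ V] (a : V → V → ℂ) : Prop :=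
  (∀ u v w : V, a (u + v) w = a u w + a v w) ∧
  (∀ (c : ℂ) (u v : V), a (c • u) v = c * a u v) ∧
  (∀ u v : V, a u v = conj (a v u)) ∧
  (∀ v : V, v ≠ 0 → 0 < (a v v).re)

open Finset

theorem Finset.sum_sum_eq_sum_card_nsmul_of_symm {ι β : Type*} [Fintype ι] [AddCommMonoid β]
    {S : ι → Finset ι} (hS : ∀ i j, j ∈ S i ↔ i ∈ S j) (f : ι → β) :
    ∑ i, ∑ j ∈ S i, f j = ∑ j, #(S j) • f j := by
  rw [sum_comm' (t' := univ) (s' := S) (by simp [hS])]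
  simp_rw [sum_const]

namespace IsHermitianPD

variable {V : Type*} [AddCommGroup V] [Module ℂ V] {a : V → V → ℂ}

def addLeft (ha : IsHermitianPD a) (z : V) : V →+ ℂ :=
  AddMonoidHom.mk' (a · z) fun x y => ha.1 x y z

theorem conj_symm (ha : IsHermitianPD a) (x y : V) : a x y = conj (a y x) :=
  ha.2.2.1 x y

theorem zero_left (ha : IsHermitianPD a) (z : V) : a 0 z = 0 :=
  map_zero (ha.addLeft z)

theorem neg_left (ha : IsHermitianPD a) (x z : V) : a (-x) z = -a x z :=
  map_neg (ha.addLeft z) x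

theorem sum_left (ha : IsHermitianPD a) {ι : Type*} (s : Finset ι) (f : ι → V) (z : V) :
    a (∑ i ∈ s, f i) z = ∑ i ∈ s, a (f i) z :=
  map_sum (ha.addLeft z) f s

theorem add_right (ha : IsHermitianPD a) (z x y : V) : a z (x + y) = a z x + a z y := by
  rw [ha.conj_symm, ha.1, map_add, ← ha.conj_symm, ← ha.conj_symm]

theorem neg_right (ha : IsHermitianPD a) (x z : V) : a z (-x) = -a z x := by
  rw [ha.conj_symm, ha.neg_left, map_neg, ← ha.conj_symm]

theorem sum_right (ha : IsHermitianPD a) {ι : Type*} (s : Finset ι) (f : ι → V) (z : V) :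
    a z (∑ i ∈ s, f i) = ∑ i ∈ s, a z (f i) := by
  simp only [ha.conj_symm z, ha.sum_left, map_sum]

theorem re_symm (ha : IsHermitianPD a) (x y : V) : (a y x).re = (a x y).re := by
  rw [ha.conj_symm y x, Complex.conj_re]

theorem re_self_nonneg (ha : IsHermitianPD a) (v : V) : 0 ≤ (a v v).re := by
  rcases eq_or_ne v 0 with rfl | hv
  · simp [ha.zero_left]
  · exact (ha.2.2.2 v hv).le

theorem re_add_self (ha : IsHermitianPD a) (x y : V) :
    (a (x + y) (x + y)).re = (a x x).re + (a y y).re + 2 * (a x y).re := by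
  rw [ha.1, ha.add_right, ha.add_right]
  simp only [Complex.add_re]
  rw [ha.re_symm x y]
  ring

theorem two_mul_re_le (ha : IsHermitianPD a) (x y : V) :
    2 * (a x y).re ≤ (a x x).re + (a y y).re := by
  have h := ha.re_self_nonneg (x + -y)
  rw [ha.re_add_self, ha.neg_right, ha.neg_left, ha.neg_right, neg_neg, Complex.neg_re] at h
  linarith

theorem re_add_self_le (ha : IsHermitianPD a) (x y : V) :
    (a (x + y) (x + y)).re ≤ 2 * (a x x).re + 2 * (a y y).re := by
  linarith [ha.re_add_self x y, ha.two_mul_re_le x y]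

variable {ι : Type*} [Fintype ι]

theorem re_sum_self_eq_of_orthogonal (ha : IsHermitianPD a) (v : ι → V) (S : ι → Finset ι)
    (horth : ∀ i j, j ∉ S i → a (v i) (v j) = 0) :
    (a (∑ i, v i) (∑ i, v i)).re = ∑ i, ∑ j ∈ S i, (a (v i) (v j)).re := by
  rw [ha.sum_left, Complex.re_sum]
  refine sum_congr rfl fun i _ => ?_
  rw [ha.sum_right, Complex.re_sum]
  exact (sum_subset (subset_univ _) fun j _ hj => by rw [horth i j hj, Complex.zero_re]).symm

theorem re_sum_self_le_of_orthogonal (ha : IsHermitianPD a) (v : ι → V) (M : ℕ)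
    (S : ι → Finset ι) (hSsymm : ∀ i j, j ∈ S i ↔ i ∈ S j) (hScard : ∀ i, #(S i) ≤ M)
    (horth : ∀ i j, j ∉ S i → a (v i) (v j) = 0) :
    (a (∑ i, v i) (∑ i, v i)).re ≤ M * ∑ i, (a (v i) (v i)).re := by
  set B : ι → ℝ := fun i => (a (v i) (v i)).re
  have hpairs : 2 * ∑ i, ∑ j ∈ S i, (a (v i) (v j)).re ≤ ∑ i, ∑ j ∈ S i, (B i + B j) := by
    rw [mul_sum]
    gcongr with i _
    rw [mul_sum]
    gcongr with j _
    exact ha.two_mul_re_le (v i) (v j)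
  have hcount : ∑ i, ∑ j ∈ S i, (B i + B j) = 2 * ∑ i, (#(S i) : ℝ) * B i := by
    simp only [sum_add_distrib, sum_const, sum_sum_eq_sum_card_nsmul_of_symm hSsymm B,
      nsmul_eq_mul]
    ring
  have hcard : ∑ i, (#(S i) : ℝ) * B i ≤ M * ∑ i, B i := by
    rw [mul_sum]
    gcongr with i _
    · exact ha.re_self_nonneg (v i)
    · exact_mod_cast hScard i
  rw [ha.re_sum_self_eq_of_orthogonal v S horth]
  linarith

end IsHermitianPD

theorem assembled_decomposition_bound_general
    {V : Type*} [AddCommGroup V] [Module ℂ V]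
    (a : V → V → ℂ) (ha : IsHermitianPD a)
    (N : ℕ)
    (u : Fin (N + 1) → V)
    (M : ℕ) (hM : 1 ≤ M)
    (S : Fin N → Finset (Fin N))
    (hSsymm : ∀ i j : Fin N, j ∈ S i ↔ i ∈ S j)
    (hScard : ∀ i : Fin N, (S i).card ≤ M)
    (horth : ∀ i j : Fin N, j ∉ S i → a (u i.succ) (u j.succ) = 0) :
    (a (∑ i, u i) (∑ i, u i)).re ≤
      2 * M * ((∑ i : Fin N, (a (u i.succ) (u i.succ)).re) + (a (u 0) (u 0)).re) := by
  have hlocal := ha.re_sum_self_le_of_orthogonal (fun i => u i.succ) M S hSsymm hScard horth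
  have hcoarse : (a (u 0) (u 0)).re ≤ M * (a (u 0) (u 0)).re :=
    le_mul_of_one_le_left (ha.re_self_nonneg (u 0)) (by exact_mod_cast hM)
  rw [Fin.sum_univ_succ]
  calc (a (u 0 + ∑ i : Fin N, u i.succ) (u 0 + ∑ i : Fin N, u i.succ)).re
      ≤ 2 * (a (u 0) (u 0)).re + 2 * (M * ∑ i : Fin N, (a (u i.succ) (u i.succ)).re) := by
        linarith [ha.re_add_self_le (u 0) (∑ i : Fin N, u i.succ)]
    _ ≤ 2 * M * ((∑ i : Fin N, (a (u i.succ) (u i.succ)).re) + (a (u 0) (u 0)).re) := by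
        linarith

/-- Lemma 2.3 of the paper: the assembled decomposition is bounded,
`|Σ_{i=0}^N u_i|_a² ≤ 2M (Σ_{i=1}^N |u_i|_a² + |u_0|_a²)`, where local pieces
belonging to non-adjacent index sets are `a`-orthogonal. -/
theorem assembled_decomposition_bound
    {V : Type*} [AddCommGroup V] [Module ℂ V]
    (a : V → V → ℂ) (ha : IsHermitianPD a)
    (N : ℕ) (hN : 1 ≤ N)
    (u : Fin (N + 1) → V)
    (M : ℕ) (hM : 1 ≤ M)
    (S : Fin N → Finset (Fin N))
    (hSmem : ∀ i : Fin N, i ∈ S i)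
    (hSsymm : ∀ i j : Fin N, j ∈ S i ↔ i ∈ S j)
    (hScard : ∀ i : Fin N, (S i).card ≤ M)
    (horth : ∀ i j : Fin N, j ∉ S i → a (u i.succ) (u j.succ) = 0) :
    (a (∑ i, u i) (∑ i, u i)).re ≤
      2 * M * ((∑ i : Fin N, (a (u i.succ) (u i.succ)).re) + (a (u 0) (u 0)).re) :=
  assembled_decomposition_bound_general a ha N u M hM S hSsymm hScard horth
end

section
/- Let V be a finite-dimensional complex vector space, a a Hermitian positive definite sesquilinear form on V, N ≥ 1, and for i = 1, …, N let a_i and s_i be Hermitian positive semidefinite sesquilinear forms on V with Σ_{i=1}^{N} a_i(v, v) ≤ a(v, v) for all v ∈ V. Let V_0 ⊆ V be a subspace, Λ > 1 and C ≥ 1 real constants, and T_1, …, T_N : V → V linear maps such that Σ_{i=1}^{N} a(T_i v, T_i v) ≤ C · Σ_{i=1}^{N} (a_i(v, v) + s_i(v, v)) for all v ∈ V. Assume moreover that every w in the a-orthogonal complement of V_0 satisfies s_i(w, w) ≤ Λ · a_i(w, w) for each i = 1, …, N. Then for every u ∈ V, if u_0 denotes the a-orthogonal projection of u onto V_0 and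 u_i := T_i(u − u_0) for i = 1, …, N, one has Σ_{i=1}^{N} a(u_i, u_i) + a(u_0, u_0) ≤ C · (1 + Λ) · a(u, u). -/
open scoped ComplexConjugate

/-- A Hermitian positive semidefinite sesquilinear form. -/
def IsHermitianPSD {V : Type*} [AddCommGroup V] [Module ℂ V] (a : V → V → ℂ) : Prop :=
  (∀ u v w : V, a (u + v) w = a u w + a v w) ∧
  (∀ (c : ℂ) (u v : V), a (c • u) v = c * a u v) ∧
  (∀ u v : V, a u v = conj (a v u)) ∧
  (∀ v : V, 0 ≤ (a v v).re)

/-! With `w = u - u₀`, Pythagoras gives `a(u,u) = a(w,w) + a(u₀,u₀)`. Since `w` lies in the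
`a`-orthogonal complement of `V₀`, `s_i(w,w) ≤ Λ a_i(w,w)`, so the stability of the `T_i` bounds the
fine energies by `C (1 + Λ) a(w,w)`; as `C (1 + Λ) ≥ 1`, the coarse term `a(u₀,u₀)` is absorbed. -/

section SesquilinearForm

variable {V : Type*} [AddCommGroup V] {a : V → V → ℂ}

theorem map_add_right_of_conj_symm
    (hadd : ∀ u v w : V, a (u + v) w = a u w + a v w)
    (hsymm : ∀ u v : V, a u v = conj (a v u)) (u v w : V) :
    a u (v + w) = a u v + a u w := by
  rw [hsymm, hadd, map_add, ← hsymm, ← hsymm]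

theorem re_self_add_of_orthogonal
    (hadd : ∀ u v w : V, a (u + v) w = a u w + a v w)
    (hsymm : ∀ u v : V, a u v = conj (a v u)) {w u : V} (horth : a w u = 0) :
    (a (w + u) (w + u)).re = (a w w).re + (a u u).re := by
  have horth' : a u w = 0 := by rw [hsymm, horth, map_zero]
  simp only [hadd, map_add_right_of_conj_symm hadd hsymm, horth, horth', Complex.add_re,
    Complex.zero_re]
  ring

theorem IsHermitianPD.re_self_nonneg_s6 [Module ℂ V] (ha : IsHermitianPD a) (v : V) :
    0 ≤ (a v v).re := by
  obtain rfl | hv := eq_or_ne v 0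
  · have hzero : a 0 0 = 0 := by simpa using ha.2.1 0 0 0
    simp [hzero]
  · exact (ha.2.2.2 v hv).le

end SesquilinearForm

theorem sum_add_le_one_add_mul {ι : Type*} (s : Finset ι) {f g : ι → ℝ} {A Λ : ℝ}
    (hΛ : 0 ≤ 1 + Λ) (hf : ∑ i ∈ s, f i ≤ A) (hg : ∀ i ∈ s, g i ≤ Λ * f i) :
    ∑ i ∈ s, (f i + g i) ≤ (1 + Λ) * A :=
  calc ∑ i ∈ s, (f i + g i) ≤ ∑ i ∈ s, (1 + Λ) * f i :=
        Finset.sum_le_sum fun i hi => by linarith [hg i hi]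
    _ = (1 + Λ) * ∑ i ∈ s, f i := (Finset.mul_sum _ _ _).symm
    _ ≤ (1 + Λ) * A := mul_le_mul_of_nonneg_left hf hΛ

theorem two_level_decomposition_stability_general
    {V : Type*} [AddCommGroup V] [Module ℂ V]
    (a : V → V → ℂ) (ha : IsHermitianPD a)
    (N : ℕ)
    (aloc sloc : Fin N → V → V → ℂ)
    (hsum : ∀ v : V, ∑ i, (aloc i v v).re ≤ (a v v).re)
    (V₀ : Submodule ℂ V)
    (Lam C : ℝ) (hLam : 1 < Lam) (hC : 1 ≤ C)
    (T : Fin N → V →ₗ[ℂ] V)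
    (hT : ∀ v : V, ∑ i, (a (T i v) (T i v)).re ≤
      C * ∑ i, ((aloc i v v).re + (sloc i v v).re))
    (hcompl : ∀ w : V, (∀ v ∈ V₀, a w v = 0) →
      ∀ i : Fin N, (sloc i w w).re ≤ Lam * (aloc i w w).re) :
    ∀ u u₀ : V, u₀ ∈ V₀ → (∀ v ∈ V₀, a (u - u₀) v = 0) →
      (∑ i, (a (T i (u - u₀)) (T i (u - u₀))).re) + (a u₀ u₀).re ≤
        C * (1 + Lam) * (a u u).re := by
  intro u u₀ hu₀ horth
  set w := u - u₀
  have hpyth : (a u u).re = (a w w).re + (a u₀ u₀).re := by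
    simpa [w] using re_self_add_of_orthogonal ha.1 ha.2.2.1 (horth u₀ hu₀)
  have hlocal : ∑ i, ((aloc i w w).re + (sloc i w w).re) ≤ (1 + Lam) * (a w w).re :=
    sum_add_le_one_add_mul _ (by linarith) (hsum w) fun i _ => hcompl w horth i
  have hfine : ∑ i, (a (T i w) (T i w)).re ≤ C * ((1 + Lam) * (a w w).re) :=
    (hT w).trans (mul_le_mul_of_nonneg_left hlocal (by linarith))
  have hcoarse := ha.re_self_nonneg_s6 u₀
  have hconst : 1 ≤ C * (1 + Lam) := by nlinarith
  rw [hpyth]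
  nlinarith [mul_le_mul_of_nonneg_right hconst hcoarse]

/-- Lemma 2.6 of the paper: stability of the two-level decomposition
`u = u_0 + Σ_{i=1}^N u_i` with `u_0` the `a`-orthogonal projection onto the coarse
space `V_0` and `u_i = T_i (u - u_0)`. -/
theorem two_level_decomposition_stability
    {V : Type*} [AddCommGroup V] [Module ℂ V] [FiniteDimensional ℂ V]
    (a : V → V → ℂ) (ha : IsHermitianPD a)
    (N : ℕ) (hN : 1 ≤ N)
    (aloc sloc : Fin N → V → V → ℂ)
    (haloc : ∀ i, IsHermitianPSD (aloc i))
    (hsloc : ∀ i, IsHermitianPSD (sloc i))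
    (hsum : ∀ v : V, ∑ i, (aloc i v v).re ≤ (a v v).re)
    (V₀ : Submodule ℂ V)
    (Lam C : ℝ) (hLam : 1 < Lam) (hC : 1 ≤ C)
    (T : Fin N → V →ₗ[ℂ] V)
    (hT : ∀ v : V, ∑ i, (a (T i v) (T i v)).re ≤
      C * ∑ i, ((aloc i v v).re + (sloc i v v).re))
    (hcompl : ∀ w : V, (∀ v ∈ V₀, a w v = 0) →
      ∀ i : Fin N, (sloc i w w).re ≤ Lam * (aloc i w w).re) :
    ∀ u u₀ : V, u₀ ∈ V₀ → (∀ v ∈ V₀, a (u - u₀) v = 0) →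
      (∑ i, (a (T i (u - u₀)) (T i (u - u₀))).re) + (a u₀ u₀).re ≤
        C * (1 + Lam) * (a u u).re :=
  two_level_decomposition_stability_general a ha N aloc sloc hsum V₀ Lam C hLam hC T hT hcompl
end

section
/- With the generalized eigenbasis setup and π the s-orthogonal projection onto span{φ_1, …, φ_l}, every v ∈ V satisfies s(v, v) ≤ 2Λ · a(v, v) + 3 · s(πv, πv). -/
open scoped ComplexConjugate

/-!
Expand `v` in the `s`-orthonormal eigenbasis, with coordinates `c j`. Then
`s(v, v) = ∑ |c j|²`, `a(v, v) = ∑ |c j|² / λ j` and `s(πv, πv) = ∑_{j < l} |c j|²`,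
so the inequality holds coordinatewise: the low modes are absorbed by `3 s(πv, πv)`,
and the high modes, where `λ j < Λ`, by `2Λ a(v, v)`.
-/

namespace IsHermitianPD

variable {V : Type*} [AddCommGroup V] [Module ℂ V] {a : V → V → ℂ}

def linearLeft (ha : IsHermitianPD a) (w : V) : V →ₗ[ℂ] ℂ where
  toFun u := a u w
  map_add' u v := ha.1 u v w
  map_smul' c u := ha.2.1 c u w

@[simp]
lemma linearLeft_apply (ha : IsHermitianPD a) (w u : V) : ha.linearLeft w u = a u w := rfl

variable {ι : Type*} [Fintype ι] (b : Module.Basis ι ℂ V)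

lemma apply_basis_right (ha : IsHermitianPD a) (horth : ∀ i j, i ≠ j → a (b i) (b j) = 0)
    (u : V) (j : ι) : a u (b j) = b.repr u j * a (b j) (b j) := by
  rw [← ha.linearLeft_apply, ← b.sum_repr u, map_sum, Finset.sum_eq_single j]
  · simp
  · intro i _ hij
    simp [horth i j hij]
  · simp

lemma repr_eq_apply (ha : IsHermitianPD a) (horth : ∀ i j, i ≠ j → a (b i) (b j) = 0)
    (hnorm : ∀ j, a (b j) (b j) = 1) (u : V) (j : ι) : b.repr u j = a u (b j) := by
  rw [ha.apply_basis_right b horth, hnorm, mul_one]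

lemma re_apply_self (ha : IsHermitianPD a) (horth : ∀ i j, i ≠ j → a (b i) (b j) = 0) (u : V) :
    (a u u).re = ∑ j, Complex.normSq (b.repr u j) * (a (b j) (b j)).re := by
  have hreal : ∀ j, a (b j) (b j) = ((a (b j) (b j)).re : ℂ) := fun j =>
    (Complex.conj_eq_iff_re.mp (ha.2.2.1 (b j) (b j)).symm).symm
  have hsum : a u u = ∑ j, b.repr u j * conj (a u (b j)) := by
    rw [← ha.linearLeft_apply, ← b.sum_repr u, map_sum]
    simp only [map_smul, linearLeft_apply, smul_eq_mul, b.sum_repr u, ha.2.2.1 (b _) u]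
  rw [hsum, Complex.re_sum]
  refine Finset.sum_congr rfl fun j _ => ?_
  rw [ha.apply_basis_right b horth, map_mul, ← mul_assoc, Complex.mul_conj, hreal j,
    Complex.conj_ofReal, ← Complex.ofReal_mul, Complex.ofReal_re, Complex.ofReal_re]

lemma repr_eq_ite_of_mem_span_image (ha : IsHermitianPD a)
    (horth : ∀ i j, i ≠ j → a (b i) (b j) = 0) (hnorm : ∀ j, a (b j) (b j) = 1)
    {S : Set ι} [DecidablePred (· ∈ S)] {v p : V} (hp : p ∈ Submodule.span ℂ (b '' S))
    (hperp : ∀ j ∈ S, a (v - p) (b j) = 0) (j : ι) :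
    b.repr p j = if j ∈ S then b.repr v j else 0 := by
  split_ifs with hj
  · have hcoord := hperp j hj
    rw [← ha.linearLeft_apply, map_sub, linearLeft_apply, linearLeft_apply, sub_eq_zero] at hcoord
    rw [ha.repr_eq_apply b horth hnorm, ha.repr_eq_apply b horth hnorm, hcoord]
  · exact Finsupp.notMem_support_iff.mp fun hmem => hj (b.mem_span_image.mp hp hmem)

end IsHermitianPD

lemma le_two_mul_mul_inv_add_three_mul_ite {x μ Λ : ℝ} (hx : 0 ≤ x) (hμ : 0 < μ) (hΛ : 0 ≤ Λ)
    {p : Prop} [Decidable p] (hhigh : ¬p → μ < Λ) :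
    x ≤ 2 * Λ * (x * μ⁻¹) + 3 * (if p then x else 0) := by
  have hlow : 0 ≤ 2 * Λ * (x * μ⁻¹) := by positivity
  split_ifs with hp
  · linarith
  · have hratio : 1 ≤ Λ * μ⁻¹ := by
      rw [← div_eq_mul_inv, one_le_div hμ]
      exact (hhigh hp).le
    nlinarith

theorem s_norm_le_two_Lambda_a_add_three_proj_general
    {V : Type*} [AddCommGroup V] [Module ℂ V]
    (n : ℕ)
    (a s : V → V → ℂ) (ha : IsHermitianPD a) (hs : IsHermitianPD s)
    (φ : Fin n → V) (lam : Fin n → ℝ)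
    (hindep : LinearIndependent ℂ φ)
    (hspan : Submodule.span ℂ (Set.range φ) = ⊤)
    (hpos : ∀ j : Fin n, 0 < lam j)
    (heig : ∀ (j : Fin n) (w : V), s (φ j) w = (lam j : ℂ) * a (φ j) w)
    (horth : ∀ j k : Fin n, j ≠ k → s (φ j) (φ k) = 0 ∧ a (φ j) (φ k) = 0)
    (hnorm : ∀ j : Fin n, s (φ j) (φ j) = 1)
    (Lam : ℝ) (hLam : 1 < Lam)
    (l : ℕ)
    (hlt : ∀ j : Fin n, l ≤ (j : ℕ) → lam j < Lam)
    (π : V → V)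
    (hπmem : ∀ v : V, π v ∈ Submodule.span ℂ (φ '' {j : Fin n | (j : ℕ) < l}))
    (hπorth : ∀ (v : V) (j : Fin n), (j : ℕ) < l → s (v - π v) (φ j) = 0) :
    ∀ v : V, (s v v).re ≤ 2 * Lam * (a v v).re + 3 * (s (π v) (π v)).re := by
  intro v
  obtain ⟨B, rfl⟩ : ∃ B : Module.Basis (Fin n) ℂ V, ⇑B = φ :=
    ⟨Module.Basis.mk hindep hspan.ge, Module.Basis.coe_mk hindep _⟩
  have hs_orth : ∀ i j, i ≠ j → s (B i) (B j) = 0 := fun i j hij => (horth i j hij).1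
  have ha_orth : ∀ i j, i ≠ j → a (B i) (B j) = 0 := fun i j hij => (horth i j hij).2
  have ha_diag : ∀ j, (a (B j) (B j)).re = (lam j)⁻¹ := by
    intro j
    have h := heig j (B j)
    rw [hnorm j] at h
    rw [eq_inv_of_mul_eq_one_right h.symm, ← Complex.ofReal_inv, Complex.ofReal_re]
  have hproj := hs.repr_eq_ite_of_mem_span_image B hs_orth hnorm (hπmem v) (hπorth v)
  rw [hs.re_apply_self B hs_orth, hs.re_apply_self B hs_orth, ha.re_apply_self B ha_orth]
  simp only [hnorm, Complex.one_re, mul_one, ha_diag, hproj]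
  rw [Finset.mul_sum, Finset.mul_sum, ← Finset.sum_add_distrib]
  refine Finset.sum_le_sum fun j _ => ?_
  rw [apply_ite Complex.normSq, map_zero]
  exact le_two_mul_mul_inv_add_three_mul_ite (Complex.normSq_nonneg _) (hpos j) (by linarith)
    fun hj => hlt j (not_lt.mp hj)

/-- Lemma 2.9 of the paper: `‖v‖_s² ≤ 2Λ |v|_a² + 3 ‖πv‖_s²` where `π` is the
`s`-orthogonal projection onto the span of the low-index eigenfunctions. -/
theorem s_norm_le_two_Lambda_a_add_three_proj
    {V : Type*} [AddCommGroup V] [Module ℂ V] [FiniteDimensional ℂ V]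
    (n : ℕ) (hn : 1 ≤ n) (hdim : Module.finrank ℂ V = n)
    (a s : V → V → ℂ) (ha : IsHermitianPD a) (hs : IsHermitianPD s)
    (φ : Fin n → V) (lam : Fin n → ℝ)
    (hindep : LinearIndependent ℂ φ)
    (hspan : Submodule.span ℂ (Set.range φ) = ⊤)
    (hmono : ∀ j k : Fin n, j ≤ k → lam k ≤ lam j)
    (hpos : ∀ j : Fin n, 0 < lam j)
    (heig : ∀ (j : Fin n) (w : V), s (φ j) w = (lam j : ℂ) * a (φ j) w)
    (horth : ∀ j k : Fin n, j ≠ k → s (φ j) (φ k) = 0 ∧ a (φ j) (φ k) = 0)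
    (hnorm : ∀ j : Fin n, s (φ j) (φ j) = 1)
    (Lam : ℝ) (hLam : 1 < Lam)
    (l : ℕ) (hln : l ≤ n)
    (hge : ∀ j : Fin n, (j : ℕ) < l → Lam ≤ lam j)
    (hlt : ∀ j : Fin n, l ≤ (j : ℕ) → lam j < Lam)
    (π : V → V)
    (hπmem : ∀ v : V, π v ∈ Submodule.span ℂ (φ '' {j : Fin n | (j : ℕ) < l}))
    (hπorth : ∀ (v : V) (j : Fin n), (j : ℕ) < l → s (v - π v) (φ j) = 0) :
    ∀ v : V, (s v v).re ≤ 2 * Lam * (a v v).re + 3 * (s (π v) (π v)).re :=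
  s_norm_le_two_Lambda_a_add_three_proj_general n a s ha hs φ lam hindep hspan hpos heig horth hnorm
    Lam hLam l hlt π hπmem hπorth
end

section
/- Let V be a finite-dimensional complex inner product space, A : V → V a self-adjoint positive definite linear operator, and set a(u, v) := ⟪A u, v⟫. Let V_0, V_1, …, V_N be subspaces of V with V = V_0 + V_1 + … + V_N. For each i, let A_i : V_i → V_i be the (invertible) operator determined by ⟪A_i u, v⟫ = ⟪A u, v⟫ for all u, v ∈ V_i, let ι_i : V_i → V be the inclusion and ι_i^* its adjoint, and define B⁻¹ := Σ_{i=0}^{N} ι_i ∘ A_i^{-1} ∘ ι_i^*. Assume: (i) there is a constant C_1 > 0 such that every u ∈ V admits a decomposition u = Σ_{i=0}^{N} u_i with u_i ∈ V_i and Σ_{i=0}^{N} a(u_i, u_i) ≤ C_1 · a(u, u); (ii) there are a natural number M ≥ 1 and sets S(i) ⊆ {1, …, N} with i ∈ S(i), symmetric membership, |S(i)| ≤ M, and a(v_i, v_j) = 0 whenever i, j ∈ {1, …, N}, j ∉ S(i), v_i ∈ V_i, v_j ∈ V_j. Then every eigenvalue μ of the operator B⁻¹ ∘ A is a real number satisfying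 C_1^{-1} ≤ μ ≤ 2M; in particular the condition number κ(B⁻¹A), defined as the ratio of the largest to the smallest eigenvalue of B⁻¹A, satisfies κ(B⁻¹A) ≤ 2M · C_1. -/
open scoped InnerProductSpace

/-- The two-level overlapping Schwarz preconditioner
`B⁻¹ = Σ_{i=0}^N ι_i ∘ A_i⁻¹ ∘ ι_i^*` built from the (given) inverses of the local
operators on the subspaces `V_0, V_1, …, V_N` (formula (2.24)/(2.30) of the paper). -/
noncomputable def schwarzPrecond {V : Type*} [NormedAddCommGroup V]
    [InnerProductSpace ℂ V] [FiniteDimensional ℂ V] {N : ℕ}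
    (Vs : Fin (N + 1) → Submodule ℂ V)
    (AiInv : ∀ i, (Vs i) →ₗ[ℂ] (Vs i)) : V →ₗ[ℂ] V :=
  ∑ i, (Vs i).subtype ∘ₗ (AiInv i) ∘ₗ LinearMap.adjoint (Vs i).subtype

/-!
Let `a(x, y) = ⟪A x, y⟫` and `P_i = ι_i A_i⁻¹ ι_i^* A`, the `a`-orthogonal projection onto `V_i`, so
that `B⁻¹A = Σ P_i` and `a(u, B⁻¹A u) = Σ a(P_i u, P_i u)` is real. An eigenvalue of `B⁻¹A` is thus
a Rayleigh quotient `a(u, B⁻¹A u) / a(u, u)`, and it suffices to bound these quotients.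

Lower bound: for a stable decomposition `u = Σ u_i`, Cauchy–Schwarz gives
`a(u, u) = Σ a(P_i u, u_i) ≤ (Σ a(P_i u, P_i u))^½ (C₁ a(u, u))^½`.
Upper bound: `a(P_0 u, P_0 u) ≤ a(u, u)`, and for `w = Σ_{i ≥ 1} P_i u` bounded overlap gives
`a(w, w) ≤ M Σ_{i ≥ 1} a(P_i u, P_i u) = M a(u, w) ≤ M a(u, u)^½ a(w, w)^½`, whence
`Σ_{i ≥ 1} a(P_i u, P_i u) ≤ M a(u, u)`; in total the quotient is at most `1 + M ≤ 2M`.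
-/

open RCLike Finset

lemma le_of_sq_le_mul {x b : ℝ} (hb : 0 ≤ b) (h : x ^ 2 ≤ b * x) : x ≤ b := by
  rcases le_or_gt x 0 with hx | hx
  · exact hx.trans hb
  · nlinarith

namespace LinearMap

variable {𝕜 E : Type*} [RCLike 𝕜] [NormedAddCommGroup E] [InnerProductSpace 𝕜 E]

noncomputable def energy (A : E →ₗ[𝕜] E) (x : E) : ℝ :=
  re ⟪A x, x⟫_𝕜

namespace IsPositive

variable {A : E →ₗ[𝕜] E} (hA : A.IsPositive)
include hA

lemma energy_nonneg (x : E) : 0 ≤ A.energy x :=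
  hA.re_inner_nonneg_left x

lemma re_inner_sq_le (x y : E) : (re ⟪A x, y⟫_𝕜) ^ 2 ≤ A.energy x * A.energy y := by
  let c : PreInnerProductSpace.Core 𝕜 E :=
    { inner := fun x y => ⟪A x, y⟫_𝕜
      conj_inner_symm := fun x y => by simp [hA.isSymmetric x y]
      re_inner_nonneg := hA.re_inner_nonneg_left
      add_left := fun x y z => by simp [inner_add_left]
      smul_left := fun x y r => by simp [inner_smul_left] }
  have hcs : |re ⟪A x, y⟫_𝕜| ≤ √(A.energy x) * √(A.energy y) :=
    (abs_re_le_norm _).trans (InnerProductSpace.Core.norm_inner_le_norm (c := c) x y)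
  calc (re ⟪A x, y⟫_𝕜) ^ 2 = |re ⟪A x, y⟫_𝕜| ^ 2 := (sq_abs _).symm
    _ ≤ (√(A.energy x) * √(A.energy y)) ^ 2 := by gcongr
    _ = A.energy x * A.energy y := by
      rw [mul_pow, Real.sq_sqrt (hA.energy_nonneg x), Real.sq_sqrt (hA.energy_nonneg y)]

lemma re_inner_le_add_div_two (x y : E) : re ⟪A x, y⟫_𝕜 ≤ (A.energy x + A.energy y) / 2 := by
  nlinarith [hA.re_inner_sq_le x y, hA.energy_nonneg x, hA.energy_nonneg y,
    sq_nonneg (A.energy x - A.energy y)]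

lemma energy_sum_le_of_bounded_overlap {ι : Type*} [Fintype ι] (v : ι → E)
    (S : ι → Finset ι) (hS : ∀ i j, j ∈ S i ↔ i ∈ S j) {M : ℕ} (hSM : ∀ i, #(S i) ≤ M)
    (horth : ∀ i j, j ∉ S i → ⟪A (v i), v j⟫_𝕜 = 0) :
    A.energy (∑ i, v i) ≤ M * ∑ i, A.energy (v i) := by
  have hexpand : A.energy (∑ i, v i) = ∑ i, ∑ j ∈ S i, re ⟪A (v i), v j⟫_𝕜 := by
    rw [energy, map_sum, sum_inner, map_sum]
    simp only [inner_sum, map_sum]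
    refine sum_congr rfl fun i _ => (sum_subset (subset_univ _) fun j _ hj => ?_).symm
    simp [horth i j hj]
  have hswap : ∑ i, ∑ j ∈ S i, A.energy (v j) = ∑ i, ∑ _j ∈ S i, A.energy (v i) :=
    sum_comm' fun i j => by simp [hS i j]
  have hcount : ∑ i, ∑ _j ∈ S i, A.energy (v i) ≤ M * ∑ i, A.energy (v i) := by
    simp only [sum_const, nsmul_eq_mul, mul_sum]
    gcongr with i
    · exact hA.energy_nonneg _
    · exact_mod_cast hSM i
  calc A.energy (∑ i, v i) = ∑ i, ∑ j ∈ S i, re ⟪A (v i), v j⟫_𝕜 := hexpand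
    _ ≤ ∑ i, ∑ j ∈ S i, (A.energy (v i) + A.energy (v j)) / 2 := by
      gcongr with i _ j; exact hA.re_inner_le_add_div_two _ _
    _ = (∑ i, ∑ _j ∈ S i, A.energy (v i) + ∑ i, ∑ j ∈ S i, A.energy (v j)) / 2 := by
      simp only [← sum_add_distrib, sum_div]
    _ ≤ M * ∑ i, A.energy (v i) := by linarith

end IsPositive

/-- `P` is the `a`-orthogonal projection onto `K`, where `a(x, y) = ⟪A x, y⟫`. -/
structure IsEnergyProjection (A : E →ₗ[𝕜] E) (K : Submodule 𝕜 E) (P : E → E) : Prop where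
  mem : ∀ u, P u ∈ K
  inner_map_eq : ∀ u, ∀ v ∈ K, ⟪A (P u), v⟫_𝕜 = ⟪A u, v⟫_𝕜

namespace IsEnergyProjection

variable {A : E →ₗ[𝕜] E} {K : Submodule 𝕜 E} {P : E → E}

lemma re_inner_eq_energy (hP : IsEnergyProjection A K P) (u : E) :
    re ⟪A u, P u⟫_𝕜 = A.energy (P u) := by
  rw [energy, hP.inner_map_eq u _ (hP.mem u)]

lemma energy_le (hA : A.IsPositive) (hP : IsEnergyProjection A K P) (u : E) :
    A.energy (P u) ≤ A.energy u := by
  linarith [hP.re_inner_eq_energy u, hA.re_inner_le_add_div_two u (P u)]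

lemma subtype_comp [FiniteDimensional 𝕜 E] {AK AKinv : K →ₗ[𝕜] K}
    (hAK : ∀ u v : K, ⟪AK u, v⟫_𝕜 = ⟪A u, v⟫_𝕜) (hinv : AK ∘ₗ AKinv = LinearMap.id) :
    IsEnergyProjection A K (K.subtype ∘ₗ AKinv ∘ₗ K.subtype.adjoint ∘ₗ A) where
  mem u := (AKinv _).2
  inner_map_eq u v hv := by
    have h := hAK (AKinv (K.subtype.adjoint (A u))) ⟨v, hv⟩
    rw [← LinearMap.comp_apply AK, hinv, LinearMap.id_apply, adjoint_inner_left] at h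
    exact h.symm

end IsEnergyProjection

section Schwarz

variable {A : E →ₗ[𝕜] E} {ι : Type*} [Fintype ι] {K : ι → Submodule 𝕜 E} {P : ι → E → E}

lemma inner_sum_eq_sum_energy (hA : A.IsSymmetric) (hP : ∀ i, IsEnergyProjection A (K i) (P i))
    (u : E) : ⟪A u, ∑ i, P i u⟫_𝕜 = ((∑ i, A.energy (P i u) : ℝ) : 𝕜) := by
  rw [inner_sum, ofReal_sum]
  refine sum_congr rfl fun i _ => ?_
  rw [← (hP i).inner_map_eq u _ ((hP i).mem u), energy, hA.coe_re_inner_apply_self]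

lemma energy_le_mul_sum_energy_of_decomposition (hA : A.IsPositive)
    (hP : ∀ i, IsEnergyProjection A (K i) (P i)) {C : ℝ} (hC : 0 ≤ C) {u : E} (w : ι → E)
    (hwK : ∀ i, w i ∈ K i) (hwu : u = ∑ i, w i)
    (hw : ∑ i, A.energy (w i) ≤ C * A.energy u) :
    A.energy u ≤ C * ∑ i, A.energy (P i u) := by
  have hsplit : A.energy u = ∑ i, re ⟪A (P i u), w i⟫_𝕜 :=
    calc A.energy u = re ⟪A u, ∑ i, w i⟫_𝕜 := by rw [← hwu, energy]
      _ = ∑ i, re ⟪A (P i u), w i⟫_𝕜 := by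
        simp only [inner_sum, map_sum, (hP _).inner_map_eq u _ (hwK _)]
  refine le_of_sq_le_mul (mul_nonneg hC (sum_nonneg fun i _ => hA.energy_nonneg _)) ?_
  calc A.energy u ^ 2 ≤ (∑ i, A.energy (P i u)) * ∑ i, A.energy (w i) := by
        rw [hsplit]
        exact sum_sq_le_sum_mul_sum_of_sq_le_mul _ (fun i _ => hA.energy_nonneg _)
          (fun i _ => hA.energy_nonneg _) fun i _ => hA.re_inner_sq_le _ _
    _ ≤ (∑ i, A.energy (P i u)) * (C * A.energy u) := by
        gcongr; exact sum_nonneg fun i _ => hA.energy_nonneg _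
    _ = C * (∑ i, A.energy (P i u)) * A.energy u := by ring

lemma sum_energy_projection_le_of_bounded_overlap (hA : A.IsPositive)
    (hP : ∀ i, IsEnergyProjection A (K i) (P i))
    (S : ι → Finset ι) (hS : ∀ i j, j ∈ S i ↔ i ∈ S j) {M : ℕ} (hSM : ∀ i, #(S i) ≤ M)
    (horth : ∀ i j, j ∉ S i → ∀ x ∈ K i, ∀ y ∈ K j, ⟪A x, y⟫_𝕜 = 0) (u : E) :
    ∑ i, A.energy (P i u) ≤ M * A.energy u := by
  set t := ∑ i, A.energy (P i u)
  have ht : re ⟪A u, ∑ i, P i u⟫_𝕜 = t := by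
    rw [inner_sum_eq_sum_energy hA.isSymmetric hP, ofReal_re]
  have hoverlap : A.energy (∑ i, P i u) ≤ M * t :=
    hA.energy_sum_le_of_bounded_overlap _ S hS hSM fun i j hij =>
      horth i j hij _ ((hP i).mem u) _ ((hP j).mem u)
  refine le_of_sq_le_mul (mul_nonneg M.cast_nonneg (hA.energy_nonneg u)) ?_
  calc t ^ 2 ≤ A.energy u * A.energy (∑ i, P i u) := ht ▸ hA.re_inner_sq_le _ _
    _ ≤ A.energy u * (M * t) := by gcongr; exact hA.energy_nonneg u
    _ = M * A.energy u * t := by ring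

end Schwarz

lemma eigenvalue_bounds_of_rayleigh_bounds {A T : E →ₗ[𝕜] E} (hA : A.IsSymmetric)
    (hApos : ∀ v, v ≠ 0 → 0 < A.energy v) {c C : ℝ} (hreal : ∀ u, im ⟪A u, T u⟫_𝕜 = 0)
    (hlow : ∀ u, c * A.energy u ≤ re ⟪A u, T u⟫_𝕜)
    (hup : ∀ u, re ⟪A u, T u⟫_𝕜 ≤ C * A.energy u) {μ : 𝕜}
    (hμ : Module.End.HasEigenvalue T μ) : im μ = 0 ∧ c ≤ re μ ∧ re μ ≤ C := by
  obtain ⟨u, hu⟩ := hμ.exists_hasEigenvector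
  have hq := hApos u hu.2
  have hTu : ⟪A u, T u⟫_𝕜 = μ * (A.energy u : 𝕜) := by
    rw [hu.apply_eq_smul, inner_smul_right, energy, hA.coe_re_inner_apply_self]
  have hre : re ⟪A u, T u⟫_𝕜 = re μ * A.energy u := by rw [hTu, re_mul_ofReal]
  refine ⟨?_, le_of_mul_le_mul_right (hre ▸ hlow u) hq,
    le_of_mul_le_mul_right (hre ▸ hup u) hq⟩
  have him := hreal u
  rw [hTu, im_mul_ofReal] at him
  exact (mul_eq_zero.1 him).resolve_right hq.ne'

end LinearMap

open LinearMap in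
theorem schwarz_eigenvalue_bounds_general
    {V : Type*} [NormedAddCommGroup V] [InnerProductSpace ℂ V] [FiniteDimensional ℂ V]
    (A : V →ₗ[ℂ] V)
    (hAsa : ∀ u v : V, ⟪A u, v⟫_ℂ = ⟪u, A v⟫_ℂ)
    (hApd : ∀ v : V, v ≠ 0 → 0 < (⟪A v, v⟫_ℂ).re)
    (N : ℕ)
    (Vs : Fin (N + 1) → Submodule ℂ V)
    (Ai : ∀ i, (Vs i) →ₗ[ℂ] (Vs i))
    (hAi : ∀ (i : Fin (N + 1)) (u v : Vs i), ⟪Ai i u, v⟫_ℂ = ⟪A (u : V), (v : V)⟫_ℂ)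
    (AiInv : ∀ i, (Vs i) →ₗ[ℂ] (Vs i))
    (hAiInv : ∀ i, (Ai i) ∘ₗ (AiInv i) = LinearMap.id ∧ (AiInv i) ∘ₗ (Ai i) = LinearMap.id)
    (C₁ : ℝ) (hC₁ : 0 < C₁)
    (hdecomp : ∀ u : V, ∃ w : Fin (N + 1) → V,
      (∀ i, w i ∈ Vs i) ∧ u = ∑ i, w i ∧
      ∑ i, (⟪A (w i), w i⟫_ℂ).re ≤ C₁ * (⟪A u, u⟫_ℂ).re)
    (M : ℕ) (hM : 1 ≤ M)
    (S : Fin N → Finset (Fin N))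
    (hSsymm : ∀ i j : Fin N, j ∈ S i ↔ i ∈ S j)
    (hScard : ∀ i : Fin N, (S i).card ≤ M)
    (horth : ∀ i j : Fin N, j ∉ S i →
      ∀ vi ∈ Vs i.succ, ∀ vj ∈ Vs j.succ, ⟪A vi, vj⟫_ℂ = 0) :
    (∀ μ : ℂ, Module.End.HasEigenvalue ((schwarzPrecond Vs AiInv) ∘ₗ A) μ →
        μ.im = 0 ∧ C₁⁻¹ ≤ μ.re ∧ μ.re ≤ 2 * M) ∧
    (∀ μ₁ μ₂ : ℂ, Module.End.HasEigenvalue ((schwarzPrecond Vs AiInv) ∘ₗ A) μ₁ →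
        Module.End.HasEigenvalue ((schwarzPrecond Vs AiInv) ∘ₗ A) μ₂ →
        μ₁.re ≤ 2 * M * C₁ * μ₂.re) := by
  have hA : A.IsPositive := ⟨hAsa, fun v => by
    rcases eq_or_ne v 0 with rfl | hv
    · simp
    · exact (hApd v hv).le⟩
  let P i := (Vs i).subtype ∘ₗ AiInv i ∘ₗ (Vs i).subtype.adjoint ∘ₗ A
  have hP i : IsEnergyProjection A (Vs i) (P i) :=
    IsEnergyProjection.subtype_comp (hAi i) (hAiInv i).1
  have hT u : (schwarzPrecond Vs AiInv ∘ₗ A) u = ∑ i, P i u := by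
    simp [schwarzPrecond, P]
  have hray u := (congrArg (inner ℂ (A u)) (hT u)).trans
    (inner_sum_eq_sum_energy hA.isSymmetric hP u)
  have hlow u : C₁⁻¹ * A.energy u ≤ ∑ i, A.energy (P i u) := by
    obtain ⟨w, hwK, hwu, hw⟩ := hdecomp u
    rw [inv_mul_le_iff₀ hC₁]
    exact energy_le_mul_sum_energy_of_decomposition hA hP hC₁.le w hwK hwu hw
  have hup u : ∑ i, A.energy (P i u) ≤ 2 * M * A.energy u := by
    have hcoarse := (hP 0).energy_le hA u
    have hlocal := sum_energy_projection_le_of_bounded_overlap hA (fun i => hP i.succ) S hSsymm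
      hScard horth u
    have hM' : (1 : ℝ) ≤ M := by exact_mod_cast hM
    rw [Fin.sum_univ_succ]
    nlinarith [hA.energy_nonneg u]
  have heig μ (hμ : Module.End.HasEigenvalue (schwarzPrecond Vs AiInv ∘ₗ A) μ) :=
    eigenvalue_bounds_of_rayleigh_bounds hA.isSymmetric hApd
      (fun u => by rw [hray, ofReal_im]) (fun u => by rw [hray, ofReal_re]; exact hlow u)
      (fun u => by rw [hray, ofReal_re]; exact hup u) hμ
  refine ⟨heig, fun μ₁ μ₂ h₁ h₂ => ?_⟩
  calc μ₁.re ≤ 2 * M := (heig μ₁ h₁).2.2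
    _ = 2 * M * C₁ * C₁⁻¹ := by field_simp
    _ ≤ 2 * M * C₁ * μ₂.re := by gcongr; exact (heig μ₂ h₂).2.1

/-- Theorem 2.7 of the paper, made quantitative: under the stable-decomposition
hypothesis (with constant `C₁`) and the bounded-overlap hypothesis (with constant
`M`), every eigenvalue `μ` of `B⁻¹A` is real with `C₁⁻¹ ≤ μ ≤ 2M`; in particular
the condition number satisfies `κ(B⁻¹A) ≤ 2M·C₁`. -/
theorem schwarz_eigenvalue_bounds
    {V : Type*} [NormedAddCommGroup V] [InnerProductSpace ℂ V] [FiniteDimensional ℂ V]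
    (A : V →ₗ[ℂ] V)
    (hAsa : ∀ u v : V, ⟪A u, v⟫_ℂ = ⟪u, A v⟫_ℂ)
    (hApd : ∀ v : V, v ≠ 0 → 0 < (⟪A v, v⟫_ℂ).re)
    (N : ℕ) (hN : 1 ≤ N)
    (Vs : Fin (N + 1) → Submodule ℂ V)
    (hsum : (⨆ i, Vs i) = ⊤)
    (Ai : ∀ i, (Vs i) →ₗ[ℂ] (Vs i))
    (hAi : ∀ (i : Fin (N + 1)) (u v : Vs i), ⟪Ai i u, v⟫_ℂ = ⟪A (u : V), (v : V)⟫_ℂ)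
    (AiInv : ∀ i, (Vs i) →ₗ[ℂ] (Vs i))
    (hAiInv : ∀ i, (Ai i) ∘ₗ (AiInv i) = LinearMap.id ∧ (AiInv i) ∘ₗ (Ai i) = LinearMap.id)
    (C₁ : ℝ) (hC₁ : 0 < C₁)
    (hdecomp : ∀ u : V, ∃ w : Fin (N + 1) → V,
      (∀ i, w i ∈ Vs i) ∧ u = ∑ i, w i ∧
      ∑ i, (⟪A (w i), w i⟫_ℂ).re ≤ C₁ * (⟪A u, u⟫_ℂ).re)
    (M : ℕ) (hM : 1 ≤ M)
    (S : Fin N → Finset (Fin N))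
    (hSmem : ∀ i : Fin N, i ∈ S i)
    (hSsymm : ∀ i j : Fin N, j ∈ S i ↔ i ∈ S j)
    (hScard : ∀ i : Fin N, (S i).card ≤ M)
    (horth : ∀ i j : Fin N, j ∉ S i →
      ∀ vi ∈ Vs i.succ, ∀ vj ∈ Vs j.succ, ⟪A vi, vj⟫_ℂ = 0) :
    (∀ μ : ℂ, Module.End.HasEigenvalue ((schwarzPrecond Vs AiInv) ∘ₗ A) μ →
        μ.im = 0 ∧ C₁⁻¹ ≤ μ.re ∧ μ.re ≤ 2 * M) ∧
    (∀ μ₁ μ₂ : ℂ, Module.End.HasEigenvalue ((schwarzPrecond Vs AiInv) ∘ₗ A) μ₁ →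
        Module.End.HasEigenvalue ((schwarzPrecond Vs AiInv) ∘ₗ A) μ₂ →
        μ₁.re ≤ 2 * M * C₁ * μ₂.re) :=
  schwarz_eigenvalue_bounds_general A hAsa hApd N Vs Ai hAi AiInv hAiInv C₁ hC₁ hdecomp M hM S
    hSsymm hScard horth
end
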